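/- arXiv:2303.08108 — 2 statements merged into one kernel-verified Lean document; each statement's English description precedes it below -/
import Mathlib

section
/- Let F be a Clairaut Riemannian map with s = e^f from a Riemannian manifold (M, g_M) to a space form (N(k), g_N) of constant sectional curvature k, such that ‖∇^N f‖ = 1. If (ker F_*)^⊥ is an integrable distribution, then for X, Y, Z, T ∈ Γ((ker F_*)^⊥), g_M(R^M(X,Y)Z, T) = (k+1)(g_M(Y,Z)g_M(X,T) − g_M(X,Z)g_M(Y,T)); hence any leaf of (ker F_*)^⊥ is a space form of constant curvature k+1. -/
open RealInnerProductSpace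

/-- Let `F` be a Clairaut Riemannian map with `s = e^f`
(so the second fundamental form is `(∇F_*)(X,Y) = -g_M(X,Y)∇^N f`) to a space form
of curvature `k`, with `‖∇^N f‖ = 1`.  Then, via the Gauss equation, for horizontal
`X, Y, Z, T`:
`g_M(R^M(X,Y)Z, T) = (k+1)(g_M(Y,Z)g_M(X,T) − g_M(X,Z)g_M(Y,T))`,
hence any leaf of `(ker F_*)^⊥` is a space form (of curvature `k+1`) and symmetric. -/
theorem clairaut_spaceform_leaves
    {H T : Type*} [NormedAddCommGroup H] [InnerProductSpace ℝ H]
    [NormedAddCommGroup T] [InnerProductSpace ℝ T]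
    -- F_* as a linear isometry of the horizontal distribution into TN
    (F : H →ₗᵢ[ℝ] T)
    -- curvature tensors of M (restricted to the integrable distribution (ker F_*)^⊥) and N
    (RM : H → H → H → H) (RN : T → T → T → T)
    -- second fundamental form (∇F_*) on horizontal vectors
    (α : H → H → T)
    (gradf : T) (k : ℝ)
    -- Gauss equation for a Riemannian map
    (hGauss : ∀ X Y Z Tv : H,
      ⟪RM X Y Z, Tv⟫ = ⟪RN (F X) (F Y) (F Z), F Tv⟫
        - ⟪α X Z, α Y Tv⟫ + ⟪α Y Z, α X Tv⟫)
    -- N is a space form of constant curvature k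
    (hSpaceForm : ∀ A B C D : T,
      ⟪RN A B C, D⟫ = k * (⟪B, C⟫ * ⟪A, D⟫ - ⟪A, C⟫ * ⟪B, D⟫))
    -- Clairaut condition with s = e^f
    (hClair : ∀ X Y : H, α X Y = -(⟪X, Y⟫) • gradf)
    (hnorm : ‖gradf‖ = 1) :
    ∀ X Y Z Tv : H,
      ⟪RM X Y Z, Tv⟫
        = (k + 1) * (⟪Y, Z⟫ * ⟪X, Tv⟫ - ⟪X, Z⟫ * ⟪Y, Tv⟫) := by
  intro X Y Z Tv
  have hg : ⟪gradf, gradf⟫ = 1 := by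
    rw [real_inner_self_eq_norm_sq, hnorm]; norm_num
  rw [hGauss, hSpaceForm, hClair, hClair, hClair, hClair,
    F.inner_map_map, F.inner_map_map]
  simp [inner_smul_left, inner_smul_right, hg]
  rw [hnorm]; ring
end

section
/- Let F be a Clairaut semi-invariant Riemannian map with s = e^f to a Kähler manifold, and let U, V ∈ Γ((range F_*)^⊥) with (range F_*)^⊥ totally geodesic. Then ∇^N_{PU} V = V(f)·BU + ∇^{F⊥}_{*F_* BU} V + ∇^{F⊥}_{CU} V, where PU = BU + CU with BU ∈ Γ(D_1) and CU ∈ Γ(η). -/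
open RealInnerProductSpace

/-- Let `F` be a Clairaut semi-invariant Riemannian map with
`s = e^f` to a Kähler manifold, with `(range F_*)^⊥` totally geodesic.  Then for
`U, V ∈ Γ((range F_*)^⊥)`:
`∇^N_{PU} V = V(f)·BU + ∇^{F⊥}_{*F_* BU} V + ∇^{F⊥}_{CU} V`,
where `PU = BU + CU` with `BU ∈ Γ(D₁)` and `CU ∈ Γ(η)`. -/
theorem clairaut_semiInvariant_nabla_PU_V
    {H T : Type*} [NormedAddCommGroup H] [InnerProductSpace ℝ H]
    [NormedAddCommGroup T] [InnerProductSpace ℝ T]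
    (F : H →ₗᵢ[ℝ] T)
    (P : T →ₗᵢ[ℝ] T) (hP2 : ∀ t, P (P t) = -t)
    (D1 η : Submodule ℝ T)
    -- Levi-Civita connection of N, normal connections (horizontal and normal indices)
    (DN : T → T → T) (DpH : H → T → T) (DpN : T → T → T)
    (hDNadd : ∀ u v w : T, DN (u + v) w = DN u w + DN v w)
    -- shape operator and its defining relation
    (S : T → T →ₗ[ℝ] T)
    (hS : ∀ (y : H) (v : T), v ∈ (LinearMap.range F.toLinearMap)ᗮ →
      DN (F y) v = -(S v (F y)) + DpH y v)
    -- (range F_*)^⊥ is totally geodesic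
    (hTG : ∀ u v : T, u ∈ (LinearMap.range F.toLinearMap)ᗮ →
      v ∈ (LinearMap.range F.toLinearMap)ᗮ → DN u v = DpN u v)
    -- the adjoint *F_*; on range F_* it inverts F_*, so F_*(*F_* BU) = BU
    (adjF : T →ₗ[ℝ] H) (hadj : ∀ (t : T) (x : H), ⟪adjF t, x⟫ = ⟪t, F x⟫)
    (hadjB : ∀ t ∈ D1, F (adjF t) = t)
    -- decomposition P v = B v + C v with B v ∈ D₁ ⊆ range F_*, C v ∈ η
    (B C : T → T)
    (hBC : ∀ v ∈ (LinearMap.range F.toLinearMap)ᗮ, P v = B v + C v)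
    (hB : ∀ v, B v ∈ D1) (hC : ∀ v, C v ∈ η)
    (hD1range : D1 ≤ LinearMap.range F.toLinearMap)
    (hηperp : η ≤ (LinearMap.range F.toLinearMap)ᗮ)
    (gradf : T)
    -- Clairaut condition: S_V F_*X = -V(f) F_*X with V(f) = ⟪∇^N f, V⟫
    (hClair : ∀ (V : T) (x : H), V ∈ (LinearMap.range F.toLinearMap)ᗮ →
      S V (F x) = -(⟪gradf, V⟫) • F x) :
    ∀ u v : T, u ∈ (LinearMap.range F.toLinearMap)ᗮ →
      v ∈ (LinearMap.range F.toLinearMap)ᗮ →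
      DN (P u) v = (⟪gradf, v⟫) • B u + DpH (adjF (B u)) v + DpN (C u) v := by
  intro u v hu hv
  have hBu : F (adjF (B u)) = B u := hadjB _ (hB u)
  have h1 : DN (B u) v = (⟪gradf, v⟫) • B u + DpH (adjF (B u)) v := by
    have := hS (adjF (B u)) v hv
    rw [hBu] at this
    have hc := hClair v (adjF (B u)) hv
    rw [hBu] at hc
    rw [this, hc, neg_smul, neg_neg]
  have h2 : DN (C u) v = DpN (C u) v := hTG _ _ (hηperp (hC u)) hv
  rw [hBC u hu, hDNadd, h1, h2]
end
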